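/- For every σ > 0, t ∈ ℝ, and k ≥ 1 (and also for k = 0 with the convention γ_{−1}(t) = 0), the Legendre–Gaussian moments satisfy the recurrence (k+1) γ_{k+1}(t) = (2k+1) [ σ² (ψ_k(t) − ζ_k(t)) + t γ_k(t) ] − k γ_{k−1}(t). -/

import Mathlib

/-!
Multiplying the three-term recurrence `(k+2) L_{k+2} = (2k+3) x L_{k+1} − (k+1) L_k` by the
Gaussian `G(s) = e^{−(s−t)²/(2σ²)}` and integrating over `[−1, 1]` reduces the claim to the
first moment `∫ s L_k(s) G(s) ds`. Writing `s = (s − t) + t` and using `(s − t) G = −σ² G′`,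
integration by parts turns this moment into `σ² (ψ_k − ζ_k) + t γ_k`: the boundary terms are
`ζ_k` because `L_k(±1) = (±1)^k`.
-/

open MeasureTheory intervalIntegral

/-- The Legendre polynomials: `L₀ = 1`, `L₁ = X`, and
`(k+1) L_{k+1}(x) = (2k+1) x L_k(x) − k L_{k−1}(x)`. -/
noncomputable def legendre : ℕ → Polynomial ℝ
  | 0 => 1
  | 1 => Polynomial.X
  | (k + 2) =>
      ((2 * ((k : ℝ) + 1) + 1) / ((k : ℝ) + 2)) • (Polynomial.X * legendre (k + 1))
        - (((k : ℝ) + 1) / ((k : ℝ) + 2)) • legendre k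

/-- `γ_k(t) = ∫_{−1}^{1} L_k(s) e^{−(s−t)²/(2σ²)} ds`. -/
noncomputable def legGamma (σ : ℝ) (k : ℕ) (t : ℝ) : ℝ :=
  ∫ s in (-1 : ℝ)..1, (legendre k).eval s * Real.exp (-(s - t) ^ 2 / (2 * σ ^ 2))

/-- `ψ_k(t) = ∫_{−1}^{1} L_k′(s) e^{−(s−t)²/(2σ²)} ds`. -/
noncomputable def legPsi (σ : ℝ) (k : ℕ) (t : ℝ) : ℝ :=
  ∫ s in (-1 : ℝ)..1,
    ((legendre k).derivative).eval s * Real.exp (-(s - t) ^ 2 / (2 * σ ^ 2))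

/-- `ζ_k(t) = e^{−(1−t)²/(2σ²)} − (−1)^k e^{−(1+t)²/(2σ²)}`. -/
noncomputable def legZeta (σ : ℝ) (k : ℕ) (t : ℝ) : ℝ :=
  Real.exp (-(1 - t) ^ 2 / (2 * σ ^ 2))
    - (-1 : ℝ) ^ k * Real.exp (-(1 + t) ^ 2 / (2 * σ ^ 2))


open Polynomial

lemma legendre_eval_succ_succ (k : ℕ) (x : ℝ) :
    ((k : ℝ) + 2) * (legendre (k + 2)).eval x
      = (2 * k + 3) * x * (legendre (k + 1)).eval x - (k + 1) * (legendre k).eval x := by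
  have hk : (k : ℝ) + 2 ≠ 0 := by positivity
  simp only [legendre, eval_sub, eval_smul, eval_mul, eval_X, smul_eq_mul]
  field_simp
  ring

lemma legendre_eval_one : ∀ k : ℕ, (legendre k).eval 1 = 1
  | 0 => by simp [legendre]
  | 1 => by simp [legendre]
  | k + 2 => by
    have h := legendre_eval_succ_succ k 1
    rw [legendre_eval_one k, legendre_eval_one (k + 1)] at h
    have hk : (k : ℝ) + 2 ≠ 0 := by positivity
    exact mul_left_cancel₀ hk (by linarith)

lemma legendre_eval_neg_one : ∀ k : ℕ, (legendre k).eval (-1) = (-1) ^ k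
  | 0 => by simp [legendre]
  | 1 => by simp [legendre]
  | k + 2 => by
    have h := legendre_eval_succ_succ k (-1)
    rw [legendre_eval_neg_one k, legendre_eval_neg_one (k + 1)] at h
    have hk : (k : ℝ) + 2 ≠ 0 := by positivity
    exact mul_left_cancel₀ hk (by linear_combination h)

noncomputable def gaussKernel (σ t s : ℝ) : ℝ :=
  Real.exp (-(s - t) ^ 2 / (2 * σ ^ 2))

lemma continuous_gaussKernel (σ t : ℝ) : Continuous (gaussKernel σ t) := by
  unfold gaussKernel
  fun_prop

lemma hasDerivAt_gaussKernel {σ : ℝ} (hσ : σ ≠ 0) (t s : ℝ) :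
    HasDerivAt (gaussKernel σ t) (-(s - t) / σ ^ 2 * gaussKernel σ t s) s := by
  have h : HasDerivAt (fun s => -(s - t) ^ 2 / (2 * σ ^ 2)) (-(2 * (s - t)) / (2 * σ ^ 2)) s := by
    simpa using (((hasDerivAt_id s).sub_const t).pow 2).neg.div_const (2 * σ ^ 2)
  refine h.exp.congr_deriv ?_
  simp only [gaussKernel]
  field_simp

lemma integral_eval_mul_sub_mul_gaussKernel {σ : ℝ} (hσ : σ ≠ 0) (t a b : ℝ) (p : ℝ[X]) :
    ∫ s in a..b, p.eval s * ((s - t) * gaussKernel σ t s)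
      = σ ^ 2 * ((∫ s in a..b, p.derivative.eval s * gaussKernel σ t s)
          - (p.eval b * gaussKernel σ t b - p.eval a * gaussKernel σ t a)) := by
  have hv : ∀ s, HasDerivAt (fun s => -σ ^ 2 * gaussKernel σ t s)
      ((s - t) * gaussKernel σ t s) s := fun s =>
    ((hasDerivAt_gaussKernel hσ t s).const_mul _).congr_deriv (by field_simp)
  have hG := continuous_gaussKernel σ t
  rw [integral_mul_deriv_eq_deriv_mul (fun s _ => p.hasDerivAt s) (fun s _ => hv s)
    (p.derivative.continuous.intervalIntegrable _ _)
    ((by fun_prop : Continuous fun s => (s - t) * gaussKernel σ t s).intervalIntegrable _ _)]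
  simp only [mul_left_comm _ (-σ ^ 2), intervalIntegral.integral_const_mul]
  ring

lemma integral_mul_legendre_mul_gaussKernel {σ : ℝ} (hσ : σ ≠ 0) (t : ℝ) (k : ℕ) :
    ∫ s in (-1 : ℝ)..1, s * (legendre k).eval s * gaussKernel σ t s
      = σ ^ 2 * (legPsi σ k t - legZeta σ k t) + t * legGamma σ k t := by
  have hG := continuous_gaussKernel σ t
  have hL := (legendre k).continuous
  have hsplit : (fun s => s * (legendre k).eval s * gaussKernel σ t s)
      = fun s => (legendre k).eval s * ((s - t) * gaussKernel σ t s)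
          + t * ((legendre k).eval s * gaussKernel σ t s) := by
    ext s; ring
  rw [hsplit, intervalIntegral.integral_add ((by fun_prop : Continuous _).intervalIntegrable _ _)
      ((by fun_prop : Continuous _).intervalIntegrable _ _),
    integral_eval_mul_sub_mul_gaussKernel hσ, intervalIntegral.integral_const_mul]
  have hG1 : gaussKernel σ t (-1) = Real.exp (-(1 + t) ^ 2 / (2 * σ ^ 2)) := by
    simp only [gaussKernel]; ring_nf
  rw [legendre_eval_one, legendre_eval_neg_one, hG1, one_mul]
  rfl

lemma legGamma_succ_succ (σ t : ℝ) (k : ℕ) :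
    ((k : ℝ) + 2) * legGamma σ (k + 2) t
      = (2 * k + 3) * (∫ s in (-1 : ℝ)..1, s * (legendre (k + 1)).eval s * gaussKernel σ t s)
        - (k + 1) * legGamma σ k t := by
  have hG := continuous_gaussKernel σ t
  have hL := (legendre (k + 1)).continuous
  have hL' := (legendre k).continuous
  simp only [legGamma, ← intervalIntegral.integral_const_mul]
  rw [← intervalIntegral.integral_sub ((by fun_prop : Continuous _).intervalIntegrable _ _)
      ((by fun_prop : Continuous _).intervalIntegrable _ _)]
  refine integral_congr fun s _ => ?_
  simp only [gaussKernel]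
  linear_combination Real.exp (-(s - t) ^ 2 / (2 * σ ^ 2)) * legendre_eval_succ_succ k s

/-- For every `σ > 0`, `t ∈ ℝ` and `k ≥ 1` (and also `k = 0` with the convention
`γ_{−1}(t) = 0`), the Legendre–Gaussian moments satisfy
`(k+1) γ_{k+1}(t) = (2k+1)[σ²(ψ_k(t) − ζ_k(t)) + t γ_k(t)] − k γ_{k−1}(t)`. -/
theorem legendre_gaussian_moment_recurrence (σ t : ℝ) (hσ : 0 < σ) :
    ∀ k : ℕ, ((k : ℝ) + 1) * legGamma σ (k + 1) t
      = (2 * (k : ℝ) + 1) * (σ ^ 2 * (legPsi σ k t - legZeta σ k t) + t * legGamma σ k t)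
        - (k : ℝ) * (if k = 0 then 0 else legGamma σ (k - 1) t) := by
  intro k
  rw [← integral_mul_legendre_mul_gaussKernel hσ.ne']
  rcases k with _ | m
  · simp [legGamma, legendre, gaussKernel]
  · rw [if_neg m.succ_ne_zero, Nat.add_sub_cancel]
    push_cast
    linear_combination legGamma_succ_succ σ t m
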